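/- (Theorem 6, bound (16)) Let p* be a Borel probability distribution on X×Y with feature expectation τ_∞ = E_{p*}{Φ}, let μ* be a minimizer of min_{μ ∈ ℝ^m} 1 − τᵀμ + φ(μ) + λᵀ|μ|, let μ_∞ be a minimizer of min_{μ ∈ ℝ^m} 1 − τ_∞ᵀμ + φ(μ) with optimal value R_Φ, and let h^U be a classification rule satisfying h^U(y|x) ≥ Φ(x,y)ᵀμ* − φ(μ*) for all x ∈ X and y ∈ Y. Then the error probability R(h^U) = ℓ(h^U,p*) satisfies R(h^U) ≤ R_Φ + |τ_∞ − τ|ᵀ|μ_∞ − μ*| + λᵀ(|μ_∞| − |μ*|). -/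

import Mathlib

/-!
Since `h^U(y|x) ≥ Φ(x,y)ᵀμ* − φ(μ*)`, integrating against `p*` gives
`R(h^U) ≤ 1 − τ_∞ᵀμ* + φ(μ*)`. Adding `(τ − τ_∞)ᵀμ*` and `λᵀ|μ*|` turns the right-hand side into the
regularized objective at `μ*`, which by optimality of `μ*` is at most its value at `μ_∞`; undoing the
same shift at `μ_∞` leaves `R_Φ + (τ_∞ − τ)ᵀ(μ_∞ − μ*) + λᵀ(|μ_∞| − |μ*|)`, and
`(τ_∞ − τ)ᵀ(μ_∞ − μ*) ≤ |τ_∞ − τ|ᵀ|μ_∞ − μ*|`.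
-/

open MeasureTheory

noncomputable section

/-- A (randomized) classification rule. -/
def IsRule {d K : ℕ} (Xs : Set (Fin d → ℝ)) (h : ↥Xs → Fin K → ℝ) : Prop :=
  (∀ x y, 0 ≤ h x y) ∧ (∀ x, ∑ y, h x y = 1) ∧ ∀ y, Measurable fun x => h x y

/-- Expected 0-1 loss. -/
def loss {d K : ℕ} {Xs : Set (Fin d → ℝ)} (h : ↥Xs → Fin K → ℝ)
    (p : Measure (↥Xs × Fin K)) : ℝ :=
  ∫ z, (1 - h z.1 z.2) ∂p

/-- `φ(μ)`. -/
def phi {d K m : ℕ} {Xs : Set (Fin d → ℝ)} (Φ : ↥Xs × Fin K → Fin m → ℝ)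
    (μ : Fin m → ℝ) : ℝ :=
  ⨆ (x : ↥Xs) (C : {C : Finset (Fin K) // C.Nonempty}),
    ((∑ y ∈ C.1, ∑ i, Φ (x, y) i * μ i) - 1) / (C.1.card : ℝ)

open Finset

namespace IsRule

variable {d K : ℕ} {Xs : Set (Fin d → ℝ)} {h : ↥Xs → Fin K → ℝ}

theorem le_one (hh : IsRule Xs h) (x : ↥Xs) (y : Fin K) : h x y ≤ 1 :=
  hh.2.1 x ▸ single_le_sum (fun y _ => hh.1 x y) (mem_univ y)

theorem measurable_uncurry (hh : IsRule Xs h) :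
    Measurable fun z : ↥Xs × Fin K => h z.1 z.2 :=
  measurable_from_prod_countable_left hh.2.2

theorem integrable_one_sub (hh : IsRule Xs h) (p : Measure (↥Xs × Fin K)) [IsFiniteMeasure p] :
    Integrable (fun z => 1 - h z.1 z.2) p := by
  refine .of_bound (measurable_const.sub hh.measurable_uncurry).aestronglyMeasurable 1
    (ae_of_all _ fun z => ?_)
  rw [Real.norm_eq_abs, abs_le]
  constructor <;> linarith [hh.1 z.1 z.2, hh.le_one z.1 z.2]

theorem loss_le_one_sub_integral (hh : IsRule Xs h) (p : Measure (↥Xs × Fin K))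
    [IsProbabilityMeasure p] {f : ↥Xs × Fin K → ℝ} (hf : Integrable f p)
    (hfh : ∀ z, f z ≤ h z.1 z.2) :
    loss h p ≤ 1 - ∫ z, f z ∂p := by
  have hmono : loss h p ≤ ∫ z, (1 - f z) ∂p :=
    integral_mono (hh.integrable_one_sub p) ((integrable_const 1).sub hf)
      fun z => sub_le_sub_left (hfh z) 1
  rwa [integral_sub (integrable_const 1) hf, integral_const, probReal_univ, one_smul] at hmono

end IsRule

theorem integral_sum_mul_const {α ι : Type*} [MeasurableSpace α] [Fintype ι] {p : Measure α}
    {Φ : α → ι → ℝ} (hΦ : ∀ i, Integrable (fun z => Φ z i) p) (μ : ι → ℝ) :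
    ∫ z, ∑ i, Φ z i * μ i ∂p = ∑ i, (∫ z, Φ z i ∂p) * μ i := by
  rw [integral_finsetSum _ fun i _ => (hΦ i).mul_const (μ i)]
  simp only [integral_mul_const]

theorem sum_mul_le_sum_abs_mul_abs {ι : Type*} [Fintype ι] (a b : ι → ℝ) :
    ∑ i, a i * b i ≤ ∑ i, |a i| * |b i| :=
  sum_le_sum fun i _ => abs_mul (a i) (b i) ▸ le_abs_self _

theorem sub_sum_mul_le_of_regularized_le {ι : Type*} [Fintype ι] (F : (ι → ℝ) → ℝ)
    (τ τ' lam μs μ' : ι → ℝ)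
    (hμs : 1 - ∑ i, τ i * μs i + F μs + ∑ i, lam i * |μs i| ≤
      1 - ∑ i, τ i * μ' i + F μ' + ∑ i, lam i * |μ' i|) :
    1 - ∑ i, τ' i * μs i + F μs ≤
      (1 - ∑ i, τ' i * μ' i + F μ') + ∑ i, |τ' i - τ i| * |μ' i - μs i| +
        ∑ i, lam i * (|μ' i| - |μs i|) := by
  have hcross := sum_mul_le_sum_abs_mul_abs (τ' - τ) (μ' - μs)
  simp only [Pi.sub_apply, sub_mul, mul_sub, sum_sub_distrib] at hcross ⊢
  linarith

theorem stmt_12_general {d K m : ℕ}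
    (Xs : Set (Fin d → ℝ))
    (Φ : ↥Xs × Fin K → Fin m → ℝ) (hΦmeas : ∀ i, Measurable fun z => Φ z i)
    (B : ℝ) (hΦbdd : ∀ z i, |Φ z i| ≤ B)
    (τ lam : Fin m → ℝ)
    (pstar : Measure (↥Xs × Fin K)) (hpstar : IsProbabilityMeasure pstar)
    (τinf : Fin m → ℝ) (hτinf : ∀ i, τinf i = ∫ z, Φ z i ∂pstar)
    (μs : Fin m → ℝ)
    (hμs : ∀ μ : Fin m → ℝ,
      1 - (∑ i, τ i * μs i) + phi Φ μs + ∑ i, lam i * |μs i| ≤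
      1 - (∑ i, τ i * μ i) + phi Φ μ + ∑ i, lam i * |μ i|)
    (μinf : Fin m → ℝ)
    (h : ↥Xs → Fin K → ℝ) (hrule : IsRule Xs h)
    (hge : ∀ (x : ↥Xs) (y : Fin K), (∑ i, Φ (x, y) i * μs i) - phi Φ μs ≤ h x y) :
    loss h pstar
      ≤ (1 - (∑ i, τinf i * μinf i) + phi Φ μinf)
        + (∑ i, |τinf i - τ i| * |μinf i - μs i|)
        + ∑ i, lam i * (|μinf i| - |μs i|) := by
  have hΦint : ∀ i, Integrable (fun z => Φ z i) pstar := fun i =>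
    .of_bound (hΦmeas i).aestronglyMeasurable B (ae_of_all _ fun z => hΦbdd z i)
  have hscore : Integrable (fun z => ∑ i, Φ z i * μs i) pstar :=
    integrable_finsetSum _ fun i _ => (hΦint i).mul_const (μs i)
  have hloss := hrule.loss_le_one_sub_integral pstar
    (f := fun z => ∑ i, Φ z i * μs i - phi Φ μs) (hscore.sub (integrable_const _))
    fun z => hge z.1 z.2
  rw [integral_sub hscore (integrable_const _), integral_const, probReal_univ, one_smul,
    integral_sum_mul_const hΦint] at hloss
  simp only [← hτinf] at hloss
  linarith [sub_sum_mul_le_of_regularized_le (phi Φ) τ τinf lam μs μinf (hμs μinf)]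

/-- Theorem 6, bound (16): `R(h^U) ≤ R_Φ + |τ_∞ − τ|ᵀ|μ_∞ − μ*| + λᵀ(|μ_∞| − |μ*|)`. -/
theorem stmt_12 {d K m : ℕ} (hK : 0 < K)
    (Xs : Set (Fin d → ℝ)) (hXs : MeasurableSet Xs)
    (Φ : ↥Xs × Fin K → Fin m → ℝ) (hΦmeas : ∀ i, Measurable fun z => Φ z i)
    (B : ℝ) (hΦbdd : ∀ z i, |Φ z i| ≤ B)
    (τ lam : Fin m → ℝ)
    (pstar : Measure (↥Xs × Fin K)) (hpstar : IsProbabilityMeasure pstar)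
    (τinf : Fin m → ℝ) (hτinf : ∀ i, τinf i = ∫ z, Φ z i ∂pstar)
    (μs : Fin m → ℝ)
    (hμs : ∀ μ : Fin m → ℝ,
      1 - (∑ i, τ i * μs i) + phi Φ μs + ∑ i, lam i * |μs i| ≤
      1 - (∑ i, τ i * μ i) + phi Φ μ + ∑ i, lam i * |μ i|)
    (μinf : Fin m → ℝ)
    (hμinf : ∀ μ : Fin m → ℝ,
      1 - (∑ i, τinf i * μinf i) + phi Φ μinf ≤
      1 - (∑ i, τinf i * μ i) + phi Φ μ)
    (h : ↥Xs → Fin K → ℝ) (hrule : IsRule Xs h)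
    (hge : ∀ (x : ↥Xs) (y : Fin K), (∑ i, Φ (x, y) i * μs i) - phi Φ μs ≤ h x y) :
    loss h pstar
      ≤ (1 - (∑ i, τinf i * μinf i) + phi Φ μinf)
        + (∑ i, |τinf i - τ i| * |μinf i - μs i|)
        + ∑ i, lam i * (|μinf i| - |μs i|) :=
  stmt_12_general Xs Φ hΦmeas B hΦbdd τ lam pstar hpstar τinf hτinf μs hμs μinf h hrule hge

end
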